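/- An element x of the subfield ℚ(√5) of ℝ (the ℚ-algebra generated by √5) is integral over ℤ if and only if x = a + b·φ for some integers a, b, where φ = (1+√5)/2 is the golden ratio. In particular φ itself is integral over ℤ, satisfying φ² = φ + 1. -/

import Mathlib

/-!
Since `√5 ^ 2 ∈ ℚ`, every element of `ℚ(√5)` is `p + q√5` with `p q : ℚ`. If such an element is
integral over `ℤ` and irrational, its minimal polynomial `X² - 2pX + (p² - 5q²)` over `ℚ` has
integer coefficients by Gauss's lemma. Then `m = 2p` is an integer, the integrality of
`5(2q)² = m² - 4(p² - 5q²)` forces `n = 2q ∈ ℤ`, and `m² - 5n² ≡ 0 [ZMOD 4]` forces `m ≡ n [ZMOD 2]`,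
so that `p + q√5 = (m - n)/2 + nφ`.
-/

noncomputable def goldenRatio' : ℝ := (1 + Real.sqrt 5) / 2

open Polynomial

theorem Algebra.exists_eq_add_smul_of_mem_adjoin_of_sq_eq {R A : Type*} [CommRing R] [CommRing A]
    [Algebra R A] {α : A} {d : R} (hα : α ^ 2 = algebraMap R A d) {x : A}
    (hx : x ∈ Algebra.adjoin R {α}) : ∃ p q : R, x = algebraMap R A p + q • α := by
  induction hx using Algebra.adjoin_induction with
  | mem x hx => exact ⟨0, 1, by rw [Set.mem_singleton_iff.mp hx]; simp⟩
  | algebraMap r => exact ⟨r, 0, by simp⟩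
  | add x y _ _ hx hy =>
    obtain ⟨p, q, rfl⟩ := hx
    obtain ⟨p', q', rfl⟩ := hy
    exact ⟨p + p', q + q', by simp only [map_add, add_smul]; ring⟩
  | mul x y _ _ hx hy =>
    obtain ⟨p, q, rfl⟩ := hx
    obtain ⟨p', q', rfl⟩ := hy
    refine ⟨p * p' + d * q * q', p * q' + q * p', ?_⟩
    simp only [Algebra.smul_def, map_add, map_mul, add_mul]
    linear_combination (algebraMap R A q * algebraMap R A q') * hα

theorem minpoly.eq_of_natDegree_eq_two {K B : Type*} [Field K] [Ring B] [Nontrivial B] [Algebra K B]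
    {x : B} {f : K[X]} (hf : f.Monic) (hdeg : f.natDegree = 2) (hfx : Polynomial.aeval x f = 0)
    (hx : x ∉ (algebraMap K B).range) : minpoly K x = f := by
  have hint : IsIntegral K x := ⟨f, hf, hfx⟩
  refine (minpoly.unique_of_degree_le_degree_minpoly K x hf hfx ?_).symm
  rw [degree_eq_natDegree hf.ne_zero, degree_eq_natDegree (minpoly.ne_zero hint), hdeg]
  exact_mod_cast (minpoly.two_le_natDegree_iff hint).mpr hx

theorem IsIntegral.coeff_minpoly_mem_range {R K S : Type*} [CommRing R] [IsDomain R]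
    [IsIntegrallyClosed R] [Field K] [Algebra R K] [IsFractionRing R K] [CommRing S] [IsDomain S]
    [Algebra R S] [Algebra K S] [IsScalarTower R K S] {x : S} (hx : IsIntegral R x) (i : ℕ) :
    (minpoly K x).coeff i ∈ (algebraMap R K).range := by
  rw [minpoly.isIntegrallyClosed_eq_field_fractions' K hx, coeff_map]
  exact ⟨_, rfl⟩

theorem minpoly_ratCast_add_ratCast_mul {B : Type*} [Field B] [CharZero B] {α : B} {d p q : ℚ}
    (hα : α ^ 2 = d) (hirr : α ∉ Set.range ((↑) : ℚ → B)) (hq : q ≠ 0) :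
    minpoly ℚ ((p : B) + q * α) = X ^ 2 - C (2 * p) * X + C (p ^ 2 - d * q ^ 2) := by
  apply minpoly.eq_of_natDegree_eq_two
  · monicity!
  · compute_degree!
  · simp only [map_add, map_sub, map_mul, map_pow, aeval_X, aeval_C, eq_ratCast, Rat.cast_ofNat]
    linear_combination (q : B) ^ 2 * hα
  · rintro ⟨r, hr⟩
    refine hirr ⟨(r - p) / q, ?_⟩
    rw [eq_ratCast] at hr
    push_cast
    field_simp
    linear_combination hr

theorem Rat.exists_intCast_eq_of_isIntegral {B : Type*} [Field B] [CharZero B] {r : ℚ}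
    (hr : IsIntegral ℤ (r : B)) : ∃ a : ℤ, (a : ℚ) = r := by
  rw [← eq_ratCast (algebraMap ℚ B), isIntegral_algebraMap_iff (algebraMap ℚ B).injective,
    IsIntegrallyClosed.isIntegral_iff] at hr
  simpa using hr

/-- `2 * p` and `p ^ 2 - d * q ^ 2` are the trace and norm of `p + q * α`: up to sign they are the
coefficients of its minimal polynomial over `ℚ`, which has integer coefficients by Gauss's lemma. -/
theorem exists_intCast_eq_trace_and_norm {B : Type*} [Field B] [CharZero B] {α : B} {d p q : ℚ}
    (hα : α ^ 2 = d) (hirr : α ∉ Set.range ((↑) : ℚ → B)) (hx : IsIntegral ℤ ((p : B) + q * α)) :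
    (∃ m : ℤ, (m : ℚ) = 2 * p) ∧ ∃ k : ℤ, (k : ℚ) = p ^ 2 - d * q ^ 2 := by
  rcases eq_or_ne q 0 with rfl | hq
  · obtain ⟨a, rfl⟩ := Rat.exists_intCast_eq_of_isIntegral (B := B) (by simpa using hx)
    exact ⟨⟨2 * a, by push_cast; ring⟩, a ^ 2, by push_cast; ring⟩
  have hcoeff := hx.coeff_minpoly_mem_range (K := ℚ)
  rw [minpoly_ratCast_add_ratCast_mul hα hirr hq] at hcoeff
  obtain ⟨m, hm⟩ := hcoeff 1
  obtain ⟨k, hk⟩ := hcoeff 0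
  simp only [eq_intCast, coeff_add, coeff_sub, coeff_X_pow, coeff_C_mul_X, coeff_C] at hm hk
  norm_num at hm hk
  exact ⟨⟨-m, by push_cast; linarith⟩, k, hk⟩

theorem Rat.exists_intCast_eq_of_prime_mul_sq {ℓ c : ℤ} (hℓ : Prime ℓ) {n : ℚ}
    (hc : (c : ℚ) = ℓ * n ^ 2) : ∃ b : ℤ, (b : ℚ) = n := by
  have hsq : ((ℓ * n) ^ 2 : ℚ) = algebraMap ℤ ℚ (ℓ * c) := by
    rw [eq_intCast]; push_cast; rw [hc]; ring
  obtain ⟨w, hw⟩ : ∃ w : ℤ, algebraMap ℤ ℚ w = ℓ * n :=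
    IsIntegrallyClosed.isIntegral_iff.mp (.of_pow two_pos (hsq ▸ isIntegral_algebraMap))
  rw [eq_intCast] at hw
  have hw2 : w ^ 2 = ℓ * c := by
    have : ((w ^ 2 : ℤ) : ℚ) = (ℓ * c : ℤ) := by push_cast; rw [hw, hc]; ring
    exact_mod_cast this
  obtain ⟨b, rfl⟩ := hℓ.dvd_of_dvd_pow (n := 2) ⟨c, hw2⟩
  refine ⟨b, mul_left_cancel₀ (Int.cast_ne_zero.mpr hℓ.ne_zero) ?_⟩
  exact_mod_cast hw

theorem exists_int_add_mul_goldenRatio'_eq {p q : ℚ} {m k : ℤ} (hm : (m : ℚ) = 2 * p)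
    (hk : (k : ℚ) = p ^ 2 - 5 * q ^ 2) :
    ∃ a b : ℤ, (p : ℝ) + q * √5 = a + b * goldenRatio' := by
  obtain ⟨n, hn⟩ := Rat.exists_intCast_eq_of_prime_mul_sq (c := m ^ 2 - 4 * k) (ℓ := 5)
    (n := 2 * q) (by norm_num) (by push_cast; rw [hm, hk]; ring)
  have hmn : m ^ 2 - 5 * n ^ 2 = 4 * k := by
    have : ((m ^ 2 - 5 * n ^ 2 : ℤ) : ℚ) = (4 * k : ℤ) := by push_cast; rw [hm, hn, hk]; ring
    exact_mod_cast this
  obtain ⟨a, ha⟩ : 2 ∣ m - n := Int.prime_two.dvd_of_dvd_pow (n := 2)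
    ⟨2 * (k + n ^ 2) - n * (m - n), by linear_combination hmn⟩
  have hmR : (m : ℝ) = 2 * p := by exact_mod_cast hm
  have hnR : (n : ℝ) = 2 * q := by exact_mod_cast hn
  have haR : (m : ℝ) - n = 2 * a := by exact_mod_cast ha
  refine ⟨a, n, ?_⟩
  rw [goldenRatio']
  linear_combination (-1 / 2 : ℝ) * hmR - (√5 / 2) * hnR + (1 / 2 : ℝ) * haR

theorem goldenRatio'_sq : goldenRatio' ^ 2 = goldenRatio' + 1 := Real.goldenRatio_sq

theorem isIntegral_goldenRatio' : IsIntegral ℤ goldenRatio' := by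
  refine ⟨X ^ 2 - X - 1, by monicity!, ?_⟩
  simp [goldenRatio'_sq]

/-- An element `x` of the subfield `ℚ(√5)` of `ℝ` is integral over `ℤ` iff
`x = a + b·φ` with `a b : ℤ`; moreover `φ` itself is integral, satisfying `φ² = φ + 1`. -/
theorem golden_integral_characterization :
    (∀ x : ℝ, x ∈ Algebra.adjoin ℚ ({Real.sqrt 5} : Set ℝ) →
      (IsIntegral ℤ x ↔ ∃ a b : ℤ, x = (a : ℝ) + (b : ℝ) * goldenRatio')) ∧
    goldenRatio' ^ 2 = goldenRatio' + 1 ∧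
    IsIntegral ℤ goldenRatio' := by
  refine ⟨fun x hx => ⟨fun hint => ?_, ?_⟩, goldenRatio'_sq, isIntegral_goldenRatio'⟩
  · have h5 : √5 ^ 2 = ((5 : ℚ) : ℝ) := by norm_num
    obtain ⟨p, q, rfl⟩ := Algebra.exists_eq_add_smul_of_mem_adjoin_of_sq_eq
      (h5.trans (eq_ratCast _ _).symm) hx
    rw [eq_ratCast, Rat.smul_def] at hint ⊢
    obtain ⟨⟨m, hm⟩, k, hk⟩ := exists_intCast_eq_trace_and_norm h5
      (by simpa using Nat.prime_five.irrational_sqrt : Irrational √5) hint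
    exact exists_int_add_mul_goldenRatio'_eq hm hk
  · rintro ⟨a, b, rfl⟩
    exact (isIntegral_intCast a).add ((isIntegral_intCast b).mul isIntegral_goldenRatio')
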